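/- Let g ∈ C¹(ℝ,ℝ) with x g(x) > 0 for x ≠ 0 and g'(0) > 0, G(x) = ∫₀ˣ g, α(x) = sign(x)√(2G(x)), and β = α⁻¹. Then for u ≠ 0, β'(u) = u / g(β(u)), and lim_{u→0} g(β(u))/u = √(g'(0)) > 0. -/

import Mathlib

open Filter Function Set Topology

/-! Since `α² = 2G`, away from `0` one has `α' = g / α`, while at `0` the slope
`α x / x = √(2 G x / x²)` tends to `√(g' 0)` by L'Hôpital's rule. Thus `α` is differentiable
everywhere with nonzero derivative, and the inverse function theorem gives
`β' (α x) = α x / g x` and `β' 0 = 1 / √(g' 0)`. Finally `g ∘ β` vanishes at `0` and has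
derivative `g' 0 / √(g' 0) = √(g' 0)` there, which is the limit of `g (β u) / u`. -/

theorem hasDerivAt_zero_iff_tendsto_div {f : ℝ → ℝ} {c : ℝ} (h0 : f 0 = 0) :
    HasDerivAt f c 0 ↔ Tendsto (fun x => f x / x) (𝓝[≠] 0) (𝓝 c) := by
  rw [hasDerivAt_iff_tendsto_slope]
  refine tendsto_congr fun x => ?_
  simp [slope_def_field, h0]

theorem tendsto_two_mul_div_sq_of_hasDerivAt {g G : ℝ → ℝ} {c : ℝ}
    (hG : ∀ x, HasDerivAt G (g x) x) (hG0 : G 0 = 0) (hg : HasDerivAt g c 0) (hg0 : g 0 = 0) :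
    Tendsto (fun x => 2 * G x / x ^ 2) (𝓝[≠] 0) (𝓝 c) := by
  have hGcont : Tendsto G (𝓝[≠] 0) (𝓝 0) := by
    simpa [hG0] using (hG 0).continuousAt.tendsto.mono_left (nhdsWithin_le_nhds (s := {0}ᶜ))
  refine HasDerivAt.lhopital_zero_nhdsNE (f' := fun x => 2 * g x) (g' := fun x => 2 * x)
    (.of_forall fun x => (hG x).const_mul 2) (.of_forall fun x => by simpa using hasDerivAt_pow 2 x)
    (eventually_nhdsWithin_of_forall fun x hx => mul_ne_zero two_ne_zero hx)
    (by simpa using hGcont.const_mul 2) ?_ ?_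
  · exact (continuous_pow 2).tendsto' 0 0 (by simp) |>.mono_left nhdsWithin_le_nhds
  · simpa only [mul_div_mul_left _ _ (two_ne_zero (α := ℝ))] using
      (hasDerivAt_zero_iff_tendsto_div hg0).1 hg

theorem eq_zero_of_forall_mul_pos {g : ℝ → ℝ} (hg : ContinuousAt g 0)
    (hsign : ∀ x, x ≠ 0 → 0 < x * g x) : g 0 = 0 := by
  apply le_antisymm
  · refine le_of_tendsto (hg.tendsto.mono_left (nhdsWithin_le_nhds (s := Iio 0))) ?_
    exact eventually_nhdsWithin_of_forall fun x hx =>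
      (neg_of_mul_pos_right (hsign x hx.ne) hx.le).le
  · refine ge_of_tendsto (hg.tendsto.mono_left (nhdsWithin_le_nhds (s := Ioi 0))) ?_
    exact eventually_nhdsWithin_of_forall fun x hx =>
      (pos_of_mul_pos_right (hsign x hx.ne') hx.le).le

section Primitive

variable {g G : ℝ → ℝ}

theorem strictMonoOn_Ici_of_forall_mul_pos (hsign : ∀ x, x ≠ 0 → 0 < x * g x)
    (hG : ∀ x, HasDerivAt G (g x) x) : StrictMonoOn G (Ici 0) := by
  refine strictMonoOn_of_deriv_pos (convex_Ici 0)
    (fun x _ => (hG x).continuousAt.continuousWithinAt) fun x hx => ?_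
  rw [interior_Ici] at hx
  rw [(hG x).deriv]
  exact pos_of_mul_pos_right (hsign x (ne_of_gt hx)) (le_of_lt hx)

theorem strictAntiOn_Iic_of_forall_mul_pos (hsign : ∀ x, x ≠ 0 → 0 < x * g x)
    (hG : ∀ x, HasDerivAt G (g x) x) : StrictAntiOn G (Iic 0) := by
  refine strictAntiOn_of_deriv_neg (convex_Iic 0)
    (fun x _ => (hG x).continuousAt.continuousWithinAt) fun x hx => ?_
  rw [interior_Iic] at hx
  rw [(hG x).deriv]
  exact neg_of_mul_pos_right (hsign x (ne_of_lt hx)) (le_of_lt hx)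

theorem pos_of_forall_mul_pos (hsign : ∀ x, x ≠ 0 → 0 < x * g x)
    (hG : ∀ x, HasDerivAt G (g x) x) (hG0 : G 0 = 0) {x : ℝ} (hx : x ≠ 0) : 0 < G x := by
  rcases hx.lt_or_gt with hx | hx
  · exact hG0 ▸ strictAntiOn_Iic_of_forall_mul_pos hsign hG hx.le (mem_Iic.2 le_rfl) hx
  · exact hG0 ▸ strictMonoOn_Ici_of_forall_mul_pos hsign hG (mem_Ici.2 le_rfl) hx.le hx

end Primitive

section LeftInverse

variable {α β : ℝ → ℝ}

theorem StrictMono.range_mem_nhds (hmono : StrictMono α) (hcont : Continuous α) (x : ℝ) :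
    range α ∈ 𝓝 (α x) := by
  refine mem_of_superset (Icc_mem_nhds (hmono (sub_one_lt x)) (hmono (lt_add_one x))) ?_
  exact (intermediate_value_Icc (by linarith) hcont.continuousOn).trans (image_subset_range _ _)

theorem StrictMono.continuousAt_leftInverse (hmono : StrictMono α) (hcont : Continuous α)
    (hβα : LeftInverse β α) (x : ℝ) : ContinuousAt β (α x) := by
  refine continuousAt_of_monotoneOn_of_image_mem_nhds ?_ (hmono.range_mem_nhds hcont x) ?_
  · rintro _ ⟨a, rfl⟩ _ ⟨b, rfl⟩ hab
    rw [hβα a, hβα b]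
    exact hmono.le_iff_le.1 hab
  · rw [← range_comp, hβα.comp_eq_id, range_id]
    exact univ_mem

theorem StrictMono.hasDerivAt_leftInverse (hmono : StrictMono α) (hcont : Continuous α)
    (hβα : LeftInverse β α) {x f' : ℝ} (hf : HasDerivAt α f' x) (hf' : f' ≠ 0) :
    HasDerivAt β f'⁻¹ (α x) := by
  refine HasDerivAt.of_local_left_inverse (hmono.continuousAt_leftInverse hcont hβα x)
    (by rwa [hβα x]) hf' ?_
  filter_upwards [hmono.range_mem_nhds hcont x] with _ ⟨y, hy⟩
  rw [← hy, hβα y]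

end LeftInverse

section SignedSqrt

noncomputable def signedSqrt (G : ℝ → ℝ) (x : ℝ) : ℝ := Real.sign x * √(2 * G x)

variable {g G : ℝ → ℝ}

@[simp]
theorem signedSqrt_zero : signedSqrt G 0 = 0 := by
  simp [signedSqrt]

theorem signedSqrt_of_nonneg (hG0 : G 0 = 0) {x : ℝ} (hx : 0 ≤ x) :
    signedSqrt G x = √(2 * G x) := by
  rcases hx.eq_or_lt with rfl | hx
  · simp [hG0]
  · rw [signedSqrt, Real.sign_of_pos hx, one_mul]

theorem signedSqrt_of_nonpos (hG0 : G 0 = 0) {x : ℝ} (hx : x ≤ 0) :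
    signedSqrt G x = -√(2 * G x) := by
  rcases hx.eq_or_lt with rfl | hx
  · simp [hG0]
  · rw [signedSqrt, Real.sign_of_neg hx, neg_one_mul]

theorem signedSqrt_div_self (x : ℝ) : signedSqrt G x / x = √(2 * G x / x ^ 2) := by
  rw [Real.sqrt_div' _ (sq_nonneg x), Real.sqrt_sq_eq_abs, signedSqrt]
  rcases lt_trichotomy x 0 with hx | rfl | hx
  · rw [Real.sign_of_neg hx, abs_of_neg hx, div_neg, neg_one_mul, neg_div]
  · simp
  · rw [Real.sign_of_pos hx, abs_of_pos hx, one_mul]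

theorem strictMono_signedSqrt (hsign : ∀ x, x ≠ 0 → 0 < x * g x)
    (hG : ∀ x, HasDerivAt G (g x) x) (hG0 : G 0 = 0) : StrictMono (signedSqrt G) := by
  have hGnonneg : ∀ x, 0 ≤ 2 * G x := fun x => by
    rcases eq_or_ne x 0 with rfl | hx
    · simp [hG0]
    · linarith [pos_of_forall_mul_pos hsign hG hG0 hx]
  refine StrictMonoOn.Iic_union_Ici (a := 0) (fun a ha b hb hab => ?_) (fun a ha b hb hab => ?_)
  · rw [signedSqrt_of_nonpos hG0 ha, signedSqrt_of_nonpos hG0 hb, neg_lt_neg_iff]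
    exact Real.sqrt_lt_sqrt (hGnonneg b)
      (by linarith [strictAntiOn_Iic_of_forall_mul_pos hsign hG ha hb hab])
  · rw [signedSqrt_of_nonneg hG0 ha, signedSqrt_of_nonneg hG0 hb]
    exact Real.sqrt_lt_sqrt (hGnonneg a)
      (by linarith [strictMonoOn_Ici_of_forall_mul_pos hsign hG ha hb hab])

theorem hasDerivAt_signedSqrt {x : ℝ} (hG : HasDerivAt G (g x) x) (hG0 : G 0 = 0) (hx : x ≠ 0)
    (hGx : 0 < G x) : HasDerivAt (signedSqrt G) (g x / signedSqrt G x) x := by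
  have hsqrt : HasDerivAt (fun y => √(2 * G y)) (2 * g x / (2 * √(2 * G x))) x :=
    (hG.const_mul 2).sqrt (by positivity)
  have hsqrt_pos : 0 < √(2 * G x) := by positivity
  rcases hx.lt_or_gt with hx | hx
  · have hev : signedSqrt G =ᶠ[𝓝 x] fun y => -√(2 * G y) := by
      filter_upwards [Iio_mem_nhds hx] with y hy
      exact signedSqrt_of_nonpos hG0 (le_of_lt hy)
    refine (hsqrt.neg.congr_of_eventuallyEq hev).congr_deriv ?_
    rw [signedSqrt_of_nonpos hG0 hx.le]
    field_simp
  · have hev : signedSqrt G =ᶠ[𝓝 x] fun y => √(2 * G y) := by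
      filter_upwards [Ioi_mem_nhds hx] with y hy
      exact signedSqrt_of_nonneg hG0 (le_of_lt hy)
    refine (hsqrt.congr_of_eventuallyEq hev).congr_deriv ?_
    rw [signedSqrt_of_nonneg hG0 hx.le]
    field_simp

theorem hasDerivAt_signedSqrt_zero {c : ℝ} (hG : ∀ x, HasDerivAt G (g x) x) (hG0 : G 0 = 0)
    (hg : HasDerivAt g c 0) (hg0 : g 0 = 0) : HasDerivAt (signedSqrt G) √c 0 := by
  rw [hasDerivAt_zero_iff_tendsto_div signedSqrt_zero]
  simp only [signedSqrt_div_self]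
  exact (tendsto_two_mul_div_sq_of_hasDerivAt hG hG0 hg hg0).sqrt

end SignedSqrt

theorem conti_filippov_beta_general
    (g : ℝ → ℝ) (hg : ContDiff ℝ 1 g)
    (hsign : ∀ x : ℝ, x ≠ 0 → 0 < x * g x)
    (hg0 : 0 < deriv g 0)
    (G : ℝ → ℝ) (hG : ∀ x : ℝ, G x = ∫ s in (0 : ℝ)..x, g s)
    (α : ℝ → ℝ)
    (hα : ∀ x : ℝ, α x = Real.sign x * Real.sqrt (2 * G x))
    (β : ℝ → ℝ)
    (hβα : ∀ x : ℝ, β (α x) = x) :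
    (∀ u ∈ Set.range α, u ≠ 0 → HasDerivAt β (u / g (β u)) u)
      ∧ Filter.Tendsto (fun u : ℝ => g (β u) / u)
          (nhdsWithin 0 {(0 : ℝ)}ᶜ) (nhds (Real.sqrt (deriv g 0)))
      ∧ 0 < Real.sqrt (deriv g 0) := by
  obtain rfl : α = signedSqrt G := funext hα
  have hGd : ∀ x, HasDerivAt G (g x) x := fun x => by
    rw [funext hG]
    exact (hg.continuous.integral_hasStrictDerivAt 0 x).hasDerivAt
  have hG0 : G 0 = 0 := by simp [hG]
  have hgd : HasDerivAt g (deriv g 0) 0 := (hg.differentiable one_ne_zero 0).hasDerivAt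
  have hg00 : g 0 = 0 := eq_zero_of_forall_mul_pos hg.continuous.continuousAt hsign
  have hα' : ∀ x, x ≠ 0 → HasDerivAt (signedSqrt G) (g x / signedSqrt G x) x := fun x hx =>
    hasDerivAt_signedSqrt (hGd x) hG0 hx (pos_of_forall_mul_pos hsign hGd hG0 hx)
  have hα0 : HasDerivAt (signedSqrt G) √(deriv g 0) 0 :=
    hasDerivAt_signedSqrt_zero hGd hG0 hgd hg00
  have hcont : Continuous (signedSqrt G) := continuous_iff_continuousAt.2 fun x => by
    rcases eq_or_ne x 0 with rfl | hx
    exacts [hα0.continuousAt, (hα' x hx).continuousAt]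
  have hmono := strictMono_signedSqrt hsign hGd hG0
  have hc : 0 < √(deriv g 0) := Real.sqrt_pos.2 hg0
  refine ⟨?_, ?_, hc⟩
  · rintro _ ⟨x, rfl⟩ hu
    have hx : x ≠ 0 := by rintro rfl; exact hu signedSqrt_zero
    have hgx : g x ≠ 0 := right_ne_zero_of_mul (hsign x hx).ne'
    rw [hβα x, ← inv_div]
    exact hmono.hasDerivAt_leftInverse hcont hβα (hα' x hx) (div_ne_zero hgx hu)
  · have hβ00 : β 0 = 0 := by simpa using hβα 0
    have hβ0 : HasDerivAt β (√(deriv g 0))⁻¹ 0 := by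
      simpa using hmono.hasDerivAt_leftInverse hcont hβα hα0 hc.ne'
    have hgβ : HasDerivAt (g ∘ β) (deriv g 0 * (√(deriv g 0))⁻¹) 0 :=
      hgd.comp_of_eq 0 hβ0 hβ00.symm
    rw [← div_eq_mul_inv, Real.div_sqrt] at hgβ
    exact (hasDerivAt_zero_iff_tendsto_div (by simp [hβ00, hg00])).1 hgβ

theorem conti_filippov_beta
    (g : ℝ → ℝ) (hg : ContDiff ℝ 1 g)
    (hsign : ∀ x : ℝ, x ≠ 0 → 0 < x * g x)
    (hg0 : 0 < deriv g 0)
    (G : ℝ → ℝ) (hG : ∀ x : ℝ, G x = ∫ s in (0 : ℝ)..x, g s)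
    (α : ℝ → ℝ)
    (hα : ∀ x : ℝ, α x = Real.sign x * Real.sqrt (2 * G x))
    (β : ℝ → ℝ)
    (hβα : ∀ x : ℝ, β (α x) = x)
    (hαβ : ∀ u ∈ Set.range α, α (β u) = u) :
    (∀ u ∈ Set.range α, u ≠ 0 → HasDerivAt β (u / g (β u)) u)
      ∧ Filter.Tendsto (fun u : ℝ => g (β u) / u)
          (nhdsWithin 0 {(0 : ℝ)}ᶜ) (nhds (Real.sqrt (deriv g 0)))
      ∧ 0 < Real.sqrt (deriv g 0) :=
  conti_filippov_beta_general g hg hsign hg0 G hG α hα β hβα
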